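/- arXiv:2011.01121 — 2 statements merged into one kernel-verified Lean document; each statement's English description precedes it below -/
import Mathlib

section
/- Let P₊, P₋ be n×n Hermitian positive definite matrices, R₊, R₋ invertible n×n matrices with R₊*P₊R₊ = I and R₋*P₋R₋ = I, and D₊, D₋ real diagonal n×n matrices with all diagonal entries strictly negative. Then the matrix D₊ + R₊*P₋R₋D₋R₋*P₋R₊ is Hermitian and negative definite; in particular the matrix R₋*P₊R₊D₊ + D₋R₋*P₋R₊ is invertible. -/
open Matrix
open scoped ComplexOrder

/-!
The normalization `Rᴴ P R = 1` alone forces `P = (R Rᴴ)⁻¹`; in particular `P₋` is Hermitian.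
Put `B = R₊ᴴ P₋ R₋`. Then `R₋ᴴ P₋ R₊ = Bᴴ`, so the matrix in question is `D₊ + B D₋ Bᴴ`,
the sum of a negative definite and a negative semidefinite matrix.
For `M = R₋ᴴ P₊ R₊` we get `M B = R₋ᴴ (P₊ R₊ R₊ᴴ) P₋ R₋ = R₋ᴴ P₋ R₋ = 1`, so
`R₋ᴴ P₊ R₊ D₊ + D₋ R₋ᴴ P₋ R₊ = M (D₊ + B D₋ Bᴴ)` is a product of invertible matrices.
-/

namespace Matrix

section Normalization

variable {n R : Type*} [Fintype n] [DecidableEq n] [CommRing R] [StarRing R] {P Q : Matrix n n R}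

theorem mul_mul_conjTranspose_eq_one_of_conjTranspose_mul_mul_eq_one (h : Qᴴ * P * Q = 1) :
    P * (Q * Qᴴ) = 1 := by
  have hQ : Q * (Qᴴ * P) = 1 := mul_eq_one_comm.mp h
  exact mul_eq_one_comm.mp (by rwa [← Matrix.mul_assoc] at hQ)

theorem isHermitian_of_conjTranspose_mul_mul_eq_one (h : Qᴴ * P * Q = 1) : P.IsHermitian := by
  rw [← inv_eq_left_inv (mul_mul_conjTranspose_eq_one_of_conjTranspose_mul_mul_eq_one h)]
  exact (isHermitian_mul_conjTranspose_self Q).inv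

end Normalization

theorem posDef_neg_diagonal_ofReal {n : Type*} [Fintype n] [DecidableEq n] {d : n → ℝ}
    (hd : ∀ i, d i < 0) : (-diagonal fun i => (d i : ℂ)).PosDef := by
  rw [diagonal_neg]
  exact posDef_diagonal_iff.mpr fun i => neg_pos.mpr (mod_cast hd i)

theorem posDef_neg_add_mul_mul_conjTranspose {m n R : Type*} [Fintype m] [Fintype n] [Ring R]
    [PartialOrder R] [StarRing R] [AddLeftMono R] {A : Matrix m m R} {D : Matrix n n R}
    (hA : (-A).PosDef) (hD : (-D).PosSemidef) (B : Matrix m n R) :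
    (-(A + B * D * Bᴴ)).PosDef := by
  have := hA.add_posSemidef (hD.mul_mul_conjTranspose_same B)
  rwa [Matrix.mul_neg, Matrix.neg_mul, ← neg_add] at this

end Matrix

theorem mul_add_mul_mul_eq_of_mul_eq_one {R : Type*} [Ring R] {M B : R} (hMB : M * B = 1)
    (A D C : R) : M * (A + B * D * C) = M * A + D * C := by
  rw [mul_add, ← mul_assoc, ← mul_assoc, hMB, one_mul]

theorem stmt5_general (n : ℕ) (Pp Pm Rp Rm : Matrix (Fin n) (Fin n) ℂ)
    (hRpP : Rpᴴ * Pp * Rp = 1) (hRmP : Rmᴴ * Pm * Rm = 1)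
    (dp dm : Fin n → ℝ) (hdp : ∀ i, dp i < 0) (hdm : ∀ i, dm i < 0)
    (Dp Dm : Matrix (Fin n) (Fin n) ℂ)
    (hDp : Dp = Matrix.diagonal fun i => (dp i : ℂ))
    (hDm : Dm = Matrix.diagonal fun i => (dm i : ℂ)) :
    (Dp + Rpᴴ * Pm * Rm * Dm * Rmᴴ * Pm * Rp).IsHermitian ∧
    (-(Dp + Rpᴴ * Pm * Rm * Dm * Rmᴴ * Pm * Rp)).PosDef ∧
    IsUnit (Rmᴴ * Pp * Rp * Dp + Dm * Rmᴴ * Pm * Rp) := by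
  have hB : (Rpᴴ * Pm * Rm)ᴴ = Rmᴴ * Pm * Rp := by
    simp [Matrix.mul_assoc, (isHermitian_of_conjTranspose_mul_mul_eq_one hRmP).eq]
  have hreassoc : Rpᴴ * Pm * Rm * Dm * Rmᴴ * Pm * Rp = Rpᴴ * Pm * Rm * Dm * (Rmᴴ * Pm * Rp) := by
    simp only [Matrix.mul_assoc]
  have hneg : (-(Dp + Rpᴴ * Pm * Rm * Dm * Rmᴴ * Pm * Rp)).PosDef := by
    have := posDef_neg_add_mul_mul_conjTranspose (hDp ▸ posDef_neg_diagonal_ofReal hdp)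
      (hDm ▸ (posDef_neg_diagonal_ofReal hdm).posSemidef) (Rpᴴ * Pm * Rm)
    rwa [hB, ← hreassoc] at this
  have hMB : Rmᴴ * Pp * Rp * (Rpᴴ * Pm * Rm) = 1 := by
    calc _ = Rmᴴ * (Pp * (Rp * Rpᴴ)) * Pm * Rm := by simp only [Matrix.mul_assoc]
      _ = 1 := by
        rw [mul_mul_conjTranspose_eq_one_of_conjTranspose_mul_mul_eq_one hRpP, Matrix.mul_one, hRmP]
  have hfactor : Rmᴴ * Pp * Rp * Dp + Dm * Rmᴴ * Pm * Rp =
      Rmᴴ * Pp * Rp * (Dp + Rpᴴ * Pm * Rm * Dm * Rmᴴ * Pm * Rp) := by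
    rw [hreassoc, mul_add_mul_mul_eq_of_mul_eq_one hMB]
    simp only [Matrix.mul_assoc]
  refine ⟨by simpa using hneg.isHermitian.neg, hneg, ?_⟩
  rw [hfactor]
  exact (IsUnit.of_mul_eq_one _ hMB).mul (by simpa using hneg.isUnit.neg)

/-- For positive definite `P±`, `R±` with `R±ᴴ P± R± = I`, and real diagonal `D±`
with strictly negative entries, `D₊ + R₊ᴴ P₋ R₋ D₋ R₋ᴴ P₋ R₊` is Hermitian negative
definite; in particular `R₋ᴴ P₊ R₊ D₊ + D₋ R₋ᴴ P₋ R₊` is invertible. -/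
theorem stmt5 (n : ℕ) (Pp Pm Rp Rm : Matrix (Fin n) (Fin n) ℂ)
    (hPp : Pp.PosDef) (hPm : Pm.PosDef)
    (hRp : IsUnit Rp) (hRm : IsUnit Rm)
    (hRpP : Rpᴴ * Pp * Rp = 1) (hRmP : Rmᴴ * Pm * Rm = 1)
    (dp dm : Fin n → ℝ) (hdp : ∀ i, dp i < 0) (hdm : ∀ i, dm i < 0)
    (Dp Dm : Matrix (Fin n) (Fin n) ℂ)
    (hDp : Dp = Matrix.diagonal fun i => (dp i : ℂ))
    (hDm : Dm = Matrix.diagonal fun i => (dm i : ℂ)) :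
    (Dp + Rpᴴ * Pm * Rm * Dm * Rmᴴ * Pm * Rp).IsHermitian ∧
    (-(Dp + Rpᴴ * Pm * Rm * Dm * Rmᴴ * Pm * Rp)).PosDef ∧
    IsUnit (Rmᴴ * Pp * Rp * Dp + Dm * Rmᴴ * Pm * Rp) :=
  stmt5_general n Pp Pm Rp Rm hRpP hRmP dp dm hdp hdm Dp Dm hDp hDm
end

section
/- Let D be an n×n diagonal complex matrix with D² purely imaginary entries (i.e., D = ζΛ with ζ = −(1+i)/√2 and Λ real diagonal positive), and let R be an n×n matrix with R*R = I. Then the 4n×2n matrix X₋ with block rows (R R; RD² R(D*)²; RD³ R(D*)³; RD RD*) satisfies X₋*JX₋ = 0, where J is the standard 4n×4n symplectic matrix [[0, −I₂ₙ],[I₂ₙ, 0]]; i.e., X₋ is the frame of a Lagrangian subspace of ℂ^{4n}. -/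
/-!
Write `X₋ = (F_D | F_{Dᴴ})` with `F_A = (R; RA²; RA³; RA)`. Since `RᴴR = 1`, the block
`F_Aᴴ J F_B` equals `Aᴴ S - S B` with `S = (Aᴴ)² + B²`. It vanishes when `S = 0`, which is
the case `(A, B) = (D, D)` or `(Dᴴ, Dᴴ)` because `D² = iΛ²` is skew-Hermitian, and when
`B = Aᴴ`, because then `B` commutes with `S`.
-/

open Matrix

namespace Matrix

variable {k m n o : Type*} {α : Type*}

theorem fromRows_fromCols_eq_fromCols_fromRows {m₁ m₂ n₁ n₂ : Type*} (A : Matrix m₁ n₁ α)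
    (B : Matrix m₁ n₂ α) (C : Matrix m₂ n₁ α) (D : Matrix m₂ n₂ α) :
    fromRows (fromCols A B) (fromCols C D) = fromCols (fromRows A C) (fromRows B D) := by
  rw [fromRows_fromCols_eq_fromBlocks, fromCols_fromRows_eq_fromBlocks]

variable [CommRing α] [StarRing α]

theorem conjTranspose_fromRows_mul_J_mul_fromRows [Fintype k] [DecidableEq k]
    (T U : Matrix k m α) (T' U' : Matrix k n α) :
    (fromRows T U)ᴴ * J k α * fromRows T' U' = Uᴴ * T' - Tᴴ * U' := by
  rw [J, conjTranspose_fromRows_eq_fromCols_conjTranspose, fromCols_mul_fromBlocks,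
    fromCols_mul_fromRows, sub_eq_add_neg]
  simp only [Matrix.mul_zero, Matrix.mul_neg, Matrix.mul_one, zero_add, add_zero, Matrix.neg_mul]

theorem conjTranspose_fromCols_mul_mul_fromCols [Fintype o] (P : Matrix o m α)
    (Q : Matrix o n α) (M : Matrix o o α) :
    (fromCols P Q)ᴴ * M * fromCols P Q =
      fromBlocks (Pᴴ * M * P) (Pᴴ * M * Q) (Qᴴ * M * P) (Qᴴ * M * Q) := by
  rw [conjTranspose_fromCols_eq_fromRows_conjTranspose, fromRows_mul, fromRows_mul_fromCols]

theorem conjTranspose_smul_sq_eq_neg_sq [Fintype m] [DecidableEq m] {Λ : Matrix m m α}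
    (hΛ : Λ.IsHermitian) {z : α} (hz : star (z ^ 2) = -z ^ 2) :
    (z • Λ)ᴴ ^ 2 = -(z • Λ) ^ 2 := by
  rw [conjTranspose_smul, hΛ.eq, smul_pow, smul_pow, ← star_pow, hz, neg_smul]

variable [Fintype k] [Fintype m] [DecidableEq k] [DecidableEq m]

def frameColumn (R : Matrix k m α) (A : Matrix m m α) : Matrix ((k ⊕ k) ⊕ (k ⊕ k)) m α :=
  fromRows (fromRows R (R * A ^ 2)) (fromRows (R * A ^ 3) (R * A))

theorem conjTranspose_frameColumn_mul_J_mul_frameColumn {R : Matrix k m α} (hR : Rᴴ * R = 1)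
    (A B : Matrix m m α) :
    (frameColumn R A)ᴴ * J (k ⊕ k) α * frameColumn R B =
      Aᴴ * (Aᴴ ^ 2 + B ^ 2) - (Aᴴ ^ 2 + B ^ 2) * B := by
  have hR' (X : Matrix m m α) : Rᴴ * (R * X) = X := by rw [← Matrix.mul_assoc, hR, Matrix.one_mul]
  rw [frameColumn, frameColumn, conjTranspose_fromRows_mul_J_mul_fromRows]
  simp only [conjTranspose_fromRows_eq_fromCols_conjTranspose, fromCols_mul_fromRows,
    conjTranspose_mul, conjTranspose_pow, Matrix.mul_assoc, hR, hR', Matrix.mul_one]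
  noncomm_ring

theorem conjTranspose_frameColumn_mul_J_mul_frameColumn_eq_zero {R : Matrix k m α}
    (hR : Rᴴ * R = 1) {A B : Matrix m m α} (hAB : Aᴴ ^ 2 + B ^ 2 = 0 ∨ B = Aᴴ) :
    (frameColumn R A)ᴴ * J (k ⊕ k) α * frameColumn R B = 0 := by
  rw [conjTranspose_frameColumn_mul_J_mul_frameColumn hR, sub_eq_zero]
  rcases hAB with hAB | rfl
  · rw [hAB, Matrix.mul_zero, Matrix.zero_mul]
  · exact ((Commute.self_pow _ 2).add_right (Commute.self_pow _ 2)).eq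

theorem conjTranspose_fromCols_frameColumn_mul_J_mul_eq_zero {R : Matrix k m α}
    (hR : Rᴴ * R = 1) {D : Matrix m m α} (hD : Dᴴ ^ 2 = -D ^ 2) :
    (fromCols (frameColumn R D) (frameColumn R Dᴴ))ᴴ * J (k ⊕ k) α *
      fromCols (frameColumn R D) (frameColumn R Dᴴ) = 0 := by
  have hD' : Dᴴ ^ 2 + D ^ 2 = 0 := by rw [hD, neg_add_cancel]
  rw [conjTranspose_fromCols_mul_mul_fromCols,
    conjTranspose_frameColumn_mul_J_mul_frameColumn_eq_zero hR (.inl hD'),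
    conjTranspose_frameColumn_mul_J_mul_frameColumn_eq_zero hR (.inr rfl),
    conjTranspose_frameColumn_mul_J_mul_frameColumn_eq_zero hR
      (.inr (conjTranspose_conjTranspose D).symm),
    conjTranspose_frameColumn_mul_J_mul_frameColumn_eq_zero hR
      (.inl (by rw [conjTranspose_conjTranspose, add_comm, hD'])),
    fromBlocks_zero]

end Matrix

theorem sq_neg_one_add_I_div_sqrt_two : (-((1 + Complex.I) / Real.sqrt 2)) ^ 2 = Complex.I := by
  have h2 : (Real.sqrt 2 : ℂ) ^ 2 = 2 := by
    rw [← Complex.ofReal_pow, Real.sq_sqrt zero_le_two, Complex.ofReal_ofNat]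
  rw [neg_sq, div_pow, h2, add_sq, Complex.I_sq]
  ring

theorem stmt13_general (n : ℕ) (R : Matrix (Fin n) (Fin n) ℂ) (hR : Rᴴ * R = 1)
    (l : Fin n → ℝ)
    (ζ : ℂ) (hζ : ζ = -((1 + Complex.I) / Real.sqrt 2))
    (D : Matrix (Fin n) (Fin n) ℂ)
    (hD : D = ζ • Matrix.diagonal fun i => (l i : ℂ))
    (J : Matrix ((Fin n ⊕ Fin n) ⊕ (Fin n ⊕ Fin n)) ((Fin n ⊕ Fin n) ⊕ (Fin n ⊕ Fin n)) ℂ)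
    (hJ : J = Matrix.fromBlocks 0 (-1) 1 0)
    (Xm : Matrix ((Fin n ⊕ Fin n) ⊕ (Fin n ⊕ Fin n)) (Fin n ⊕ Fin n) ℂ)
    (hXm : Xm = Matrix.fromRows
      (Matrix.fromRows (Matrix.fromCols R R)
        (Matrix.fromCols (R * D ^ 2) (R * (Dᴴ) ^ 2)))
      (Matrix.fromRows (Matrix.fromCols (R * D ^ 3) (R * (Dᴴ) ^ 3))
        (Matrix.fromCols (R * D) (R * Dᴴ)))) :
    Xmᴴ * J * Xm = 0 := by
  have hζ2 : star (ζ ^ 2) = -ζ ^ 2 := by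
    rw [hζ, sq_neg_one_add_I_div_sqrt_two, Complex.star_def, Complex.conj_I]
  have hΛ : (diagonal fun i => (l i : ℂ)).IsHermitian :=
    isHermitian_diagonal_of_self_adjoint _ (funext fun i => Complex.conj_ofReal (l i))
  have hDsq : Dᴴ ^ 2 = -D ^ 2 := hD ▸ conjTranspose_smul_sq_eq_neg_sq hΛ hζ2
  have hXm' : Xm = fromCols (frameColumn R D) (frameColumn R Dᴴ) := by
    rw [hXm, frameColumn, frameColumn, fromRows_fromCols_eq_fromCols_fromRows,
      fromRows_fromCols_eq_fromCols_fromRows, fromRows_fromCols_eq_fromCols_fromRows]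
  rw [hXm', hJ]
  exact conjTranspose_fromCols_frameColumn_mul_J_mul_eq_zero hR hDsq

/-- With `D = ζΛ`, `ζ = −(1+i)/√2`, `Λ` real diagonal positive (so `D²` is purely
imaginary), and `RᴴR = I`, the `4n × 2n` matrix with block rows
`(R R; RD² R(Dᴴ)²; RD³ R(Dᴴ)³; RD RDᴴ)` satisfies `X₋ᴴ J X₋ = 0`, i.e. it is the
frame of a Lagrangian subspace of `ℂ^{4n}`. -/
theorem stmt13 (n : ℕ) (R : Matrix (Fin n) (Fin n) ℂ) (hR : Rᴴ * R = 1)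
    (l : Fin n → ℝ) (hl : ∀ i, 0 < l i)
    (ζ : ℂ) (hζ : ζ = -((1 + Complex.I) / Real.sqrt 2))
    (D : Matrix (Fin n) (Fin n) ℂ)
    (hD : D = ζ • Matrix.diagonal fun i => (l i : ℂ))
    (J : Matrix ((Fin n ⊕ Fin n) ⊕ (Fin n ⊕ Fin n)) ((Fin n ⊕ Fin n) ⊕ (Fin n ⊕ Fin n)) ℂ)
    (hJ : J = Matrix.fromBlocks 0 (-1) 1 0)
    (Xm : Matrix ((Fin n ⊕ Fin n) ⊕ (Fin n ⊕ Fin n)) (Fin n ⊕ Fin n) ℂ)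
    (hXm : Xm = Matrix.fromRows
      (Matrix.fromRows (Matrix.fromCols R R)
        (Matrix.fromCols (R * D ^ 2) (R * (Dᴴ) ^ 2)))
      (Matrix.fromRows (Matrix.fromCols (R * D ^ 3) (R * (Dᴴ) ^ 3))
        (Matrix.fromCols (R * D) (R * Dᴴ)))) :
    Xmᴴ * J * Xm = 0 :=
  stmt13_general n R hR l ζ hζ D hD J hJ Xm hXm
end
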